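/- arXiv:1405.0384 — 5 statements merged into one kernel-verified Lean document; each statement's English description precedes it below -/
import Mathlib

section
/- Let N ≥ 3, let S ⊆ {1,…,N}² and let Q be an N×N real matrix. Let P ∈ A(S) satisfy PQ = QP, let φ₁,…,φ_m be a basis of the linear space A_lin(S), and let Φ = [vec(φ₁),…,vec(φ_m)] ∈ ℝ^{N²×m}. Then A(S) ∩ Com(Q) = {P} if and only if the matrix Δ(Q)Φ has full column rank (equivalently, x ↦ Δ(Q)Φx is injective). -/
open Matrix Kronecker

/-- Column-stacking vectorization: `vec(A)_{(j,i)} = A_{i,j}`. -/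
def vecM {N : ℕ} (A : Matrix (Fin N) (Fin N) ℝ) : Fin N × Fin N → ℝ :=
  fun p => A p.2 p.1

/-- `Δ(A) = I ⊗ A − Aᵀ ⊗ I`. -/
noncomputable def Delta {N : ℕ} (A : Matrix (Fin N) (Fin N) ℝ) :
    Matrix (Fin N × Fin N) (Fin N × Fin N) ℝ :=
  (1 : Matrix (Fin N) (Fin N) ℝ) ⊗ₖ A - Aᵀ ⊗ₖ (1 : Matrix (Fin N) (Fin N) ℝ)

/-- The affine space `A(S)` of matrices with rows summing to `1` and support inside `S`. -/
def ASet {N : ℕ} (S : Set (Fin N × Fin N)) : Set (Matrix (Fin N) (Fin N) ℝ) :=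
  {A | (∀ i, ∑ j, A i j = 1) ∧ ∀ i j, (i, j) ∉ S → A i j = 0}

/-- The linear space `A_lin(S)` of matrices with rows summing to `0` and support inside `S`. -/
def AlinSet {N : ℕ} (S : Set (Fin N × Fin N)) : Set (Matrix (Fin N) (Fin N) ℝ) :=
  {A | (∀ i, ∑ j, A i j = 0) ∧ ∀ i j, (i, j) ∉ S → A i j = 0}

/-- The commutant of `Q`. -/
def Com {N : ℕ} (Q : Matrix (Fin N) (Fin N) ℝ) : Set (Matrix (Fin N) (Fin N) ℝ) :=
  {A | A * Q = Q * A}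

lemma delta_vec {N : ℕ} (Q B : Matrix (Fin N) (Fin N) ℝ) :
    (Delta Q).mulVec (vecM B) = vecM (Q * B - B * Q) := by
  funext p
  obtain ⟨j, i⟩ := p
  simp [Delta, Matrix.mulVec, dotProduct, vecM, Matrix.sub_apply, Matrix.mul_apply,
    Fintype.sum_prod_type, Matrix.one_apply, sub_mul, Finset.sum_sub_distrib, ite_mul,
    mul_comm]
  rw [Finset.sum_comm]
  simp [mul_sub, Finset.sum_sub_distrib, mul_ite, Finset.sum_ite_eq, mul_comm]

lemma phi_mulVec {N m : ℕ} (φ : Fin m → Matrix (Fin N) (Fin N) ℝ) (x : Fin m → ℝ) :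
    (Matrix.of fun p i => vecM (φ i) p).mulVec x = vecM (∑ i, x i • φ i) := by
  funext p
  simp [Matrix.mulVec, dotProduct, vecM, Matrix.sum_apply, mul_comm]

lemma F_eq {N m : ℕ} (Q : Matrix (Fin N) (Fin N) ℝ)
    (φ : Fin m → Matrix (Fin N) (Fin N) ℝ) (x : Fin m → ℝ) :
    (Delta Q * Matrix.of fun p i => vecM (φ i) p).mulVec x
      = vecM (Q * (∑ i, x i • φ i) - (∑ i, x i • φ i) * Q) := by
  rw [← Matrix.mulVec_mulVec, phi_mulVec, delta_vec]

lemma vecM_eq_zero {N : ℕ} {B : Matrix (Fin N) (Fin N) ℝ} (h : vecM B = 0) : B = 0 := by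
  funext i j
  exact congrFun h (j, i)

/-- With `P ∈ A(S)` commuting with `Q` and `φ₁,…,φ_m` a basis of
`A_lin(S)`, `A(S) ∩ Com(Q) = {P}` iff `Δ(Q)Φ` has full column rank (i.e. is injective). -/
theorem stmt_5 (N m : ℕ) (hN : 3 ≤ N) (S : Set (Fin N × Fin N))
    (Q P : Matrix (Fin N) (Fin N) ℝ) (hP : P ∈ ASet S) (hPQ : P * Q = Q * P)
    (φ : Fin m → Matrix (Fin N) (Fin N) ℝ)
    (hmem : ∀ i, φ i ∈ AlinSet S)
    (hindep : LinearIndependent ℝ φ)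
    (hspan : ∀ A ∈ AlinSet S, ∃ c : Fin m → ℝ, A = ∑ i, c i • φ i) :
    ASet S ∩ Com Q = {P} ↔
      Function.Injective fun x : Fin m → ℝ =>
        (Delta Q * Matrix.of fun p i => vecM (φ i) p).mulVec x := by
  constructor
  · intro h
    -- kernel triviality
    have hker : ∀ x : Fin m → ℝ,
        (Delta Q * Matrix.of fun p i => vecM (φ i) p).mulVec x = 0 → x = 0 := by
      intro x hx
      set B := ∑ i, x i • φ i with hB
      have hBcomm : Q * B - B * Q = 0 := by
        apply vecM_eq_zero
        rw [← F_eq Q φ x]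
        exact hx
      have hBmem : B ∈ AlinSet S := by
        constructor
        · intro i
          simp only [hB, Matrix.sum_apply, Matrix.smul_apply, smul_eq_mul]
          rw [Finset.sum_comm]
          simp [← Finset.mul_sum, (hmem _).1]
        · intro i j hij
          simp [hB, Matrix.sum_apply, (hmem _).2 i j hij]
      have hABmem : P + B ∈ ASet S ∩ Com Q := by
        refine ⟨⟨fun i => ?_, fun i j hij => ?_⟩, ?_⟩
        · simp [Matrix.add_apply, Finset.sum_add_distrib, hP.1 i, hBmem.1 i]
        · simp [Matrix.add_apply, hP.2 i j hij, hBmem.2 i j hij]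
        · show (P + B) * Q = Q * (P + B)
          have : Q * B = B * Q := by linear_combination (norm := noncomm_ring) hBcomm
          rw [add_mul, mul_add, hPQ, this]
      rw [h] at hABmem
      have hB0 : B = 0 := by
        have : P + B = P := hABmem
        linear_combination (norm := noncomm_ring) this
      funext i
      exact Fintype.linearIndependent_iff.mp hindep x (hB.symm.trans hB0) i
    -- convert kernel triviality into injectivity of the linear map
    intro x y hxy
    have hsub : (Delta Q * Matrix.of fun p i => vecM (φ i) p).mulVec (x - y) = 0 := by
      rw [Matrix.mulVec_sub]
      simpa [sub_eq_zero] using hxy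
    have := hker (x - y) hsub
    funext i
    have := congrFun this i
    simpa [sub_eq_zero] using this
  · intro hinj
    apply Set.eq_singleton_iff_unique_mem.mpr
    refine ⟨⟨hP, hPQ⟩, ?_⟩
    rintro A ⟨hA1, hA2⟩
    have hBmem : A - P ∈ AlinSet S := by
      constructor
      · intro i
        simp [Matrix.sub_apply, Finset.sum_sub_distrib, hA1.1 i, hP.1 i]
      · intro i j hij
        simp [Matrix.sub_apply, hA1.2 i j hij, hP.2 i j hij]
    obtain ⟨c, hc⟩ := hspan _ hBmem
    have hcomm : Q * (A - P) - (A - P) * Q = 0 := by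
      have h1 : A * Q = Q * A := hA2
      linear_combination (norm := noncomm_ring) hPQ - h1
    have hFc : (Delta Q * Matrix.of fun p i => vecM (φ i) p).mulVec c = 0 := by
      rw [F_eq Q φ c, ← hc, hcomm]
      funext p
      simp [vecM]
    have hc0 : c = 0 := by
      apply hinj
      simp only [hFc]
      rw [Matrix.mulVec_zero]
    have : A - P = 0 := by
      rw [hc, hc0]
      simp
    linear_combination (norm := noncomm_ring) this
end

section
/- Let N ≥ 3, let S ⊆ {1,…,N}², and let μ be a probability distribution on ℕ with finite support, so that G_μ(A) = ∑_{l≥0} μ(l) A^l is a polynomial in A and is defined for every A ∈ A(S). Then the set { A ∈ A(S) : A(S) ∩ Com(G_μ(A)) = {A} } is either empty or an open dense subset of A(S) (in the subspace topology of the affine space A(S)). -/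
open Matrix Polynomial

variable {N : ℕ}

open Classical in
/-- Constraint matrix: rows index the linear constraints on `B` (commutation with `G`,
row sums zero, vanishing off `S`), columns index entries of `B`. -/
noncomputable def Wm (S : Set (Fin N × Fin N)) (G : Matrix (Fin N) (Fin N) ℝ) :
    Matrix ((Fin N × Fin N) ⊕ (Fin N ⊕ (Fin N × Fin N))) (Fin N × Fin N) ℝ :=
  fun r c =>
    match r with
    | Sum.inl (k, l) => (if c.1 = k then G c.2 l else 0) - (if c.2 = l then G k c.1 else 0)
    | Sum.inr (Sum.inl k) => if c.1 = k then 1 else 0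
    | Sum.inr (Sum.inr (k, l)) => if (k, l) ∉ S ∧ c = (k, l) then 1 else 0

lemma Wm_mulVec_eq_zero_iff (S : Set (Fin N × Fin N)) (G B : Matrix (Fin N) (Fin N) ℝ) :
    Wm S G *ᵥ (fun c => B c.1 c.2) = 0 ↔
      (B * G = G * B ∧ (∀ i, ∑ j, B i j = 0) ∧ ∀ k l, (k, l) ∉ S → B k l = 0) := by
  classical
  have h1 : ∀ k l, (Wm S G *ᵥ fun c => B c.1 c.2) (Sum.inl (k, l))
      = (B * G) k l - (G * B) k l := by
    intro k l
    simp only [Wm, mulVec, dotProduct, Fintype.sum_prod_type, sub_mul, ite_mul, zero_mul,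
      Finset.sum_sub_distrib, Finset.sum_ite_eq', Finset.mem_univ, if_true, mul_apply]
    congr 1
    rw [Finset.sum_comm]
    simp [Finset.sum_ite_eq', mul_comm]
  have h2 : ∀ k, (Wm S G *ᵥ fun c => B c.1 c.2) (Sum.inr (Sum.inl k)) = ∑ j, B k j := by
    intro k
    simp [Wm, mulVec, dotProduct, Fintype.sum_prod_type, ite_mul, zero_mul,
      Finset.sum_ite_eq', Finset.mem_univ]
  have h3 : ∀ k l, (Wm S G *ᵥ fun c => B c.1 c.2) (Sum.inr (Sum.inr (k, l)))
      = if (k, l) ∉ S then B k l else 0 := by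
    intro k l
    simp only [Wm, mulVec, dotProduct, ite_and, ite_mul, zero_mul, one_mul]
    by_cases hS : (k, l) ∉ S <;> simp [hS, Finset.sum_ite_eq']
  constructor
  · intro h
    refine ⟨?_, fun i => ?_, fun k l hkl => ?_⟩
    · ext k l
      have := congrFun h (Sum.inl (k, l))
      rw [h1] at this
      simpa [sub_eq_zero] using this
    · have := congrFun h (Sum.inr (Sum.inl i)); rwa [h2] at this
    · have := congrFun h (Sum.inr (Sum.inr (k, l)))
      rw [h3] at this; simpa [hkl] using this
  · rintro ⟨hc, hr, hs⟩
    funext r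
    rcases r with ⟨k, l⟩ | k | ⟨k, l⟩
    · rw [h1, hc]; simp
    · rw [h2]; simpa using hr k
    · rw [h3]
      by_cases hS : (k, l) ∉ S <;> simp [hS, hs k l]


lemma det_transpose_mul_self_ne_zero_iff {m n : Type*} [Fintype m] [Fintype n] [DecidableEq n]
    (W : Matrix m n ℝ) :
    (Wᵀ * W).det ≠ 0 ↔ ∀ v : n → ℝ, W *ᵥ v = 0 → v = 0 := by
  constructor
  · intro hdet v hv
    have hU : IsUnit (Wᵀ * W) := (Matrix.isUnit_iff_isUnit_det _).mpr (isUnit_iff_ne_zero.mpr hdet)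
    have hinj : Function.Injective ((Wᵀ * W).mulVec) := mulVec_injective_iff_isUnit.mpr hU
    have : (Wᵀ * W) *ᵥ v = (Wᵀ * W) *ᵥ 0 := by
      rw [← mulVec_mulVec, hv, mulVec_zero, mulVec_zero]
    exact hinj this
  · intro h
    have hinj : Function.Injective ((Wᵀ * W).mulVec) := by
      intro x y hxy
      have hv : (Wᵀ * W) *ᵥ (x - y) = 0 := by
        rw [mulVec_sub, hxy, sub_self]
      have hWv : W *ᵥ (x - y) = 0 := by
        have h0 : (x - y) ⬝ᵥ ((Wᵀ * W) *ᵥ (x - y)) = 0 := by rw [hv, dotProduct_zero]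
        rw [← mulVec_mulVec, dotProduct_mulVec, vecMul_transpose,
          dotProduct_self_eq_zero] at h0
        rw [h0]
      have := h _ hWv
      exact sub_eq_zero.mp this
    have hU : IsUnit (Wᵀ * W) := mulVec_injective_iff_isUnit.mp hinj
    exact isUnit_iff_ne_zero.mp ((Matrix.isUnit_iff_isUnit_det _).mp hU)


def IsPolyFun (f : ℝ → ℝ) : Prop := ∃ p : Polynomial ℝ, ∀ t, f t = p.eval t

namespace IsPolyFun

lemma const (c : ℝ) : IsPolyFun fun _ => c := ⟨C c, by simp⟩

lemma add {f g : ℝ → ℝ} (hf : IsPolyFun f) (hg : IsPolyFun g) :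
    IsPolyFun fun t => f t + g t := by
  obtain ⟨p, hp⟩ := hf; obtain ⟨q, hq⟩ := hg
  exact ⟨p + q, fun t => by simp [hp, hq]⟩

lemma sub {f g : ℝ → ℝ} (hf : IsPolyFun f) (hg : IsPolyFun g) :
    IsPolyFun fun t => f t - g t := by
  obtain ⟨p, hp⟩ := hf; obtain ⟨q, hq⟩ := hg
  exact ⟨p - q, fun t => by simp [hp, hq]⟩

lemma mul {f g : ℝ → ℝ} (hf : IsPolyFun f) (hg : IsPolyFun g) :
    IsPolyFun fun t => f t * g t := by
  obtain ⟨p, hp⟩ := hf; obtain ⟨q, hq⟩ := hg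
  exact ⟨p * q, fun t => by simp [hp, hq]⟩

lemma finsetSum {ι : Type*} (s : Finset ι) (f : ι → ℝ → ℝ) (h : ∀ i, IsPolyFun (f i)) :
    IsPolyFun fun t => ∑ i ∈ s, f i t := by
  choose p hp using h
  exact ⟨∑ i ∈ s, p i, fun t => by simp [eval_finset_sum, hp]⟩

lemma finsetProd {ι : Type*} (s : Finset ι) (f : ι → ℝ → ℝ) (h : ∀ i, IsPolyFun (f i)) :
    IsPolyFun fun t => ∏ i ∈ s, f i t := by
  choose p hp using h
  exact ⟨∏ i ∈ s, p i, fun t => by simp [eval_prod, hp]⟩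

lemma ite (c : Prop) [Decidable c] {f g : ℝ → ℝ} (hf : IsPolyFun f) (hg : IsPolyFun g) :
    IsPolyFun fun t => if c then f t else g t := by
  by_cases h : c <;> simp [h, hf, hg]

end IsPolyFun

lemma isPolyFun_det {m : Type*} [Fintype m] [DecidableEq m] (M : ℝ → Matrix m m ℝ)
    (h : ∀ i j, IsPolyFun fun t => M t i j) : IsPolyFun fun t => (M t).det := by
  have : ∀ t, (M t).det = ∑ σ : Equiv.Perm m, ((Equiv.Perm.sign σ : ℤ) : ℝ) * ∏ i, M t (σ i) i :=
    fun t => Matrix.det_apply' (M t)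
  simp only [this]
  exact .finsetSum _ _ fun σ => (IsPolyFun.const _).mul (.finsetProd _ _ fun i => h _ _)

variable {N : ℕ}

noncomputable def Gm (μ : ℕ → ℝ) (s : Finset ℕ) (A : Matrix (Fin N) (Fin N) ℝ) :
    Matrix (Fin N) (Fin N) ℝ := ∑ l ∈ s, μ l • A ^ l

lemma finsum_eq_Gm (μ : ℕ → ℝ) (hfin : (Function.support μ).Finite)
    (A : Matrix (Fin N) (Fin N) ℝ) :
    ∑ᶠ l, μ l • A ^ l = Gm μ hfin.toFinset A := by
  refine finsum_eq_sum_of_support_subset _ fun l hl => ?_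
  rw [Set.Finite.coe_toFinset]
  intro h
  exact hl (by simp [h])

lemma commute_Gm (μ : ℕ → ℝ) (s : Finset ℕ) (A : Matrix (Fin N) (Fin N) ℝ) :
    A * Gm μ s A = Gm μ s A * A := by
  rw [Gm, Finset.mul_sum, Finset.sum_mul]
  refine Finset.sum_congr rfl fun l _ => ?_
  rw [mul_smul_comm, smul_mul_assoc, ← pow_succ, ← pow_succ']

lemma Gm_continuous (μ : ℕ → ℝ) (s : Finset ℕ) :
    Continuous (Gm μ s : Matrix (Fin N) (Fin N) ℝ → _) :=
  continuous_finset_sum _ fun l _ => (continuous_pow l).const_smul (μ l)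


noncomputable def fdet (S : Set (Fin N × Fin N)) (G : Matrix (Fin N) (Fin N) ℝ) : ℝ :=
  ((Wm S G)ᵀ * Wm S G).det

lemma fdet_ne_zero_iff (S : Set (Fin N × Fin N)) (G : Matrix (Fin N) (Fin N) ℝ) :
    fdet S G ≠ 0 ↔ ∀ B : Matrix (Fin N) (Fin N) ℝ,
      (B * G = G * B ∧ (∀ i, ∑ j, B i j = 0) ∧ ∀ k l, (k, l) ∉ S → B k l = 0) → B = 0 := by
  rw [fdet, det_transpose_mul_self_ne_zero_iff]
  constructor
  · intro h B hB
    have := h (fun c => B c.1 c.2) ((Wm_mulVec_eq_zero_iff S G B).mpr hB)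
    ext i j; exact congrFun this (i, j)
  · intro h v hv
    have h2 : (Matrix.of fun i j => v (i, j)) = 0 := by
      refine h _ ((Wm_mulVec_eq_zero_iff S G _).mp ?_)
      have he : (fun c : Fin N × Fin N => (Matrix.of fun i j => v (i, j)) c.1 c.2) = v := rfl
      rw [he]; exact hv
    funext x
    have := congrFun (congrFun h2 x.1) x.2
    simpa using this

lemma char_lemma (S : Set (Fin N × Fin N)) (μ : ℕ → ℝ) (s : Finset ℕ)
    (A : Matrix (Fin N) (Fin N) ℝ) (hA : A ∈ ASet S)
    (hAc : A * Gm μ s A = Gm μ s A * A) :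
    (ASet S ∩ Com (Gm μ s A) = {A}) ↔ fdet S (Gm μ s A) ≠ 0 := by
  rw [fdet_ne_zero_iff]
  constructor
  · rintro h B ⟨hc, hr, hs⟩
    have hmem : A + B ∈ ASet S ∩ Com (Gm μ s A) := by
      refine ⟨⟨fun i => ?_, fun i j hij => ?_⟩, ?_⟩
      · simp [Matrix.add_apply, Finset.sum_add_distrib, hA.1 i, hr i]
      · simp [Matrix.add_apply, hA.2 i j hij, hs i j hij]
      · show (A + B) * _ = _ * (A + B)
        rw [add_mul, mul_add, hAc, hc]
    rw [h] at hmem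
    exact add_eq_left.mp hmem
  · intro h
    apply Set.eq_singleton_iff_unique_mem.mpr
    refine ⟨⟨hA, hAc⟩, fun C hC => ?_⟩
    have h0 : C - A = 0 := by
      refine h (C - A) ⟨?_, fun i => ?_, fun k l hkl => ?_⟩
      · rw [sub_mul, mul_sub, hC.2, hAc]
      · simp [Matrix.sub_apply, Finset.sum_sub_distrib, hC.1.1 i, hA.1 i]
      · simp [Matrix.sub_apply, hC.1.2 k l hkl, hA.2 k l hkl]
    exact sub_eq_zero.mp h0

lemma fdet_Gm_continuous (S : Set (Fin N × Fin N)) (μ : ℕ → ℝ) (s : Finset ℕ) :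
    Continuous fun A : Matrix (Fin N) (Fin N) ℝ => fdet S (Gm μ s A) := by
  have hG : Continuous (Gm μ s : Matrix (Fin N) (Fin N) ℝ → _) :=
    continuous_finset_sum _ fun l _ => (continuous_pow l).const_smul (μ l)
  have hW : Continuous fun A => Wm S (Gm μ s A) := by
    apply continuous_matrix
    rintro (⟨k, l⟩ | k | ⟨k, l⟩) c
    · exact ((hG.matrix_elem c.2 l).if_const _ continuous_const).sub
        ((hG.matrix_elem k c.1).if_const _ continuous_const)
    · exact continuous_const
    · exact continuous_const
  exact (hW.matrix_transpose.matrix_mul hW).matrix_det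

lemma isPolyFun_pow_entry (M : ℝ → Matrix (Fin N) (Fin N) ℝ)
    (h : ∀ i j, IsPolyFun fun t => M t i j) (l : ℕ) :
    ∀ i j, IsPolyFun fun t => (M t ^ l) i j := by
  induction l with
  | zero =>
    intro i j
    simp only [pow_zero, Matrix.one_apply]
    exact IsPolyFun.ite _ (.const 1) (.const 0)
  | succ l ih =>
    intro i j
    simp only [pow_succ, Matrix.mul_apply]
    exact .finsetSum _ _ fun k => (ih i k).mul (h k j)

lemma isPolyFun_fdet (S : Set (Fin N × Fin N)) (μ : ℕ → ℝ) (s : Finset ℕ)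
    (M : ℝ → Matrix (Fin N) (Fin N) ℝ) (h : ∀ i j, IsPolyFun fun t => M t i j) :
    IsPolyFun fun t => fdet S (Gm μ s (M t)) := by
  have hGm : ∀ i j, IsPolyFun fun t => Gm μ s (M t) i j := by
    intro i j
    simp only [Gm, Matrix.sum_apply, Matrix.smul_apply, smul_eq_mul]
    exact .finsetSum _ _ fun l => (IsPolyFun.const (μ l)).mul (isPolyFun_pow_entry M h l i j)
  have hent : ∀ x c, IsPolyFun fun t => Wm S (Gm μ s (M t)) x c := by
    rintro (⟨k, l⟩ | k | ⟨k, l⟩) c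
    · exact ((hGm c.2 l).ite _ (.const 0)).sub ((hGm k c.1).ite _ (.const 0))
    · exact .const _
    · exact .const _
  apply isPolyFun_det
  intro r c
  simp only [Matrix.mul_apply, Matrix.transpose_apply]
  exact .finsetSum _ _ fun x => (hent x r).mul (hent x c)

/-- For a finitely supported probability distribution `μ` on `ℕ`, the set
`{A ∈ A(S) : A(S) ∩ Com(G_μ(A)) = {A}}` is either empty or an open dense subset of `A(S)`
(in the subspace topology of the affine space `A(S)`). -/
theorem stmt_6 (N : ℕ) (hN : 3 ≤ N) (S : Set (Fin N × Fin N))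
    (μ : ℕ → ℝ) (hμnonneg : ∀ l, 0 ≤ μ l) (hμsum : HasSum μ 1)
    (hfin : (Function.support μ).Finite)
    (T : Set ↥(ASet S))
    (hT : T = {A | ASet S ∩ Com (∑ᶠ l, μ l • (A : Matrix (Fin N) (Fin N) ℝ) ^ l)
                    = {(A : Matrix (Fin N) (Fin N) ℝ)}}) :
    T = ∅ ∨ (IsOpen T ∧ Dense T) := by
  classical
  let s : Finset ℕ := hfin.toFinset
  let f : Matrix (Fin N) (Fin N) ℝ → ℝ := fun A => fdet S (Gm μ s A)
  have hchar : ∀ A : ↥(ASet S), A ∈ T ↔ f ↑A ≠ 0 := by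
    intro A
    have hmem : A ∈ T ↔ (A : Matrix (Fin N) (Fin N) ℝ) ∈ Subtype.val '' T :=
      (Subtype.val_injective.mem_set_image).symm
    rw [hmem, hT]
    simp only [Set.mem_setOf_eq]
    rw [finsum_eq_Gm μ hfin]
    exact char_lemma S μ s (A : Matrix (Fin N) (Fin N) ℝ) A.2 (commute_Gm μ s (A : Matrix (Fin N) (Fin N) ℝ))
  have hTset : T = {A : ↥(ASet S) | f ↑A ≠ 0} := Set.ext hchar
  by_cases hE : T = ∅
  · exact Or.inl hE
  refine Or.inr ⟨?_, ?_⟩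
  · rw [hTset]
    have : {A : ↥(ASet S) | f ↑A ≠ 0} = (fun A : ↥(ASet S) => f ↑A) ⁻¹' ({0}ᶜ) := rfl
    rw [this]
    exact isOpen_compl_singleton.preimage ((fdet_Gm_continuous S μ s).comp continuous_subtype_val)
  · obtain ⟨A₀, hA₀⟩ := Set.nonempty_iff_ne_empty.mpr hE
    intro B
    set L : ℝ → Matrix (Fin N) (Fin N) ℝ :=
      fun t => (1 - t) • (B : Matrix (Fin N) (Fin N) ℝ) + t • (A₀ : Matrix (Fin N) (Fin N) ℝ)
      with hL
    have hmem : ∀ t, L t ∈ ASet S := by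
      intro t
      obtain ⟨hB1, hB2⟩ := B.2
      obtain ⟨hA1, hA2⟩ := A₀.2
      refine ⟨fun i => ?_, fun i j hij => ?_⟩
      · simp only [hL, Matrix.add_apply, Matrix.smul_apply, smul_eq_mul,
          Finset.sum_add_distrib, ← Finset.mul_sum, hB1 i, hA1 i]
        ring
      · simp [hL, Matrix.add_apply, Matrix.smul_apply, hB2 i j hij, hA2 i j hij]
    have hentries : ∀ i j, IsPolyFun fun t => L t i j := by
      intro i j
      refine ⟨Polynomial.C ((B : Matrix (Fin N) (Fin N) ℝ) i j) +
        Polynomial.C ((A₀ : Matrix (Fin N) (Fin N) ℝ) i j -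
          (B : Matrix (Fin N) (Fin N) ℝ) i j) * Polynomial.X, fun t => ?_⟩
      simp only [hL, Matrix.add_apply, Matrix.smul_apply, smul_eq_mul,
        Polynomial.eval_add, Polynomial.eval_mul, Polynomial.eval_C, Polynomial.eval_X]
      ring
    obtain ⟨p, hp0⟩ := isPolyFun_fdet S μ s L hentries
    have hp : ∀ x : ℝ, fdet S (Gm μ s (L x)) = p.eval x := fun x => hp0 x
    have hL1 : L 1 = (A₀ : Matrix (Fin N) (Fin N) ℝ) := by simp [hL]
    have hp1 : p.eval 1 ≠ 0 := by
      rw [← hp 1, hL1]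
      exact (hchar A₀).mp hA₀
    have hpne : p ≠ 0 := fun h0 => hp1 (by simp [h0])
    have hroots : Set.Finite {x : ℝ | p.IsRoot x} := Polynomial.finite_setOf_isRoot hpne
    have hLc : Continuous L :=
      ((continuous_const.sub continuous_id).smul continuous_const).add
        (continuous_id.smul continuous_const)
    have hchoice : ∀ n : ℕ, ∃ t : ℝ,
        t ∈ Set.Ioo (0 : ℝ) (1 / (n + 1)) \ {x : ℝ | p.IsRoot x} := by
      intro n
      exact ((Set.Ioo_infinite (by positivity)).diff hroots).nonempty
    choose t ht using hchoice
    have ht0 : ∀ n, 0 < t n := fun n => (ht n).1.1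
    have ht1 : ∀ n, t n < 1 / (n + 1) := fun n => (ht n).1.2
    have htr : ∀ n, ¬ p.IsRoot (t n) := fun n => (ht n).2
    have htend : Filter.Tendsto t Filter.atTop (nhds 0) :=
      squeeze_zero (fun n => (ht0 n).le) (fun n => (ht1 n).le)
        tendsto_one_div_add_atTop_nhds_zero_nat
    set u : ℕ → ↥(ASet S) := fun n => ⟨L (t n), hmem (t n)⟩ with hu
    have hL0 : L 0 = (B : Matrix (Fin N) (Fin N) ℝ) := by simp [hL]
    have hutend : Filter.Tendsto u Filter.atTop (nhds B) := by
      rw [tendsto_subtype_rng]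
      have : Filter.Tendsto (fun n => L (t n)) Filter.atTop (nhds (L 0)) :=
        (hLc.continuousAt.tendsto).comp htend
      rwa [hL0] at this
    have huT : ∀ n, u n ∈ T := by
      intro n
      refine (hchar (u n)).mpr ?_
      show f (L (t n)) ≠ 0
      show fdet S (Gm μ s (L (t n))) ≠ 0
      rw [hp (t n)]
      exact htr n
    exact mem_closure_of_tendsto hutend (Filter.Eventually.of_forall huT)
end

section
/- Let N ≥ 3, let S ⊆ {1,…,N}² contain the full diagonal {(j,j) : j = 1,…,N}, let P ∈ A(S) be row-stochastic, let μ be a probability distribution on ℕ and set Q = G_μ(P). Then the identity matrix I belongs to A(S) ∩ Com(Q), and for every α ∈ (0,1) the convex combination αI + (1−α)P belongs to A(S) ∩ Com(Q). In particular, if P ≠ I then A(S) ∩ Com(Q) ≠ {P}, i.e. the problem is not identifiable. -/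
open Matrix

/-- If `S` contains the full diagonal, `P ∈ A(S)` is row-stochastic and
`Q = G_μ(P)`, then `I ∈ A(S) ∩ Com(Q)`, every convex combination `αI + (1−α)P` with
`α ∈ (0,1)` lies in `A(S) ∩ Com(Q)`, and if `P ≠ I` then `A(S) ∩ Com(Q) ≠ {P}`. -/
theorem stmt_8 (N : ℕ) (hN : 3 ≤ N) (S : Set (Fin N × Fin N))
    (hdiag : ∀ j, (j, j) ∈ S)
    (P : Matrix (Fin N) (Fin N) ℝ) (hP : P ∈ ASet S)
    (hPnonneg : ∀ i j, 0 ≤ P i j)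
    (μ : ℕ → ℝ) (hμnonneg : ∀ l, 0 ≤ μ l) (hμsum : HasSum μ 1)
    (Q : Matrix (Fin N) (Fin N) ℝ)
    (hQ : Q = Matrix.of fun i j => ∑' l, μ l * (P ^ l) i j) :
    (1 : Matrix (Fin N) (Fin N) ℝ) ∈ ASet S ∩ Com Q ∧
    (∀ α : ℝ, α ∈ Set.Ioo (0 : ℝ) 1 →
      α • (1 : Matrix (Fin N) (Fin N) ℝ) + (1 - α) • P ∈ ASet S ∩ Com Q) ∧
    (P ≠ 1 → ASet S ∩ Com Q ≠ {P}) := by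
  obtain ⟨hProw, hPsupp⟩ := hP
  -- entries of powers are nonneg and rows sum to 1
  have hpow_nonneg : ∀ l i j, 0 ≤ (P ^ l) i j := by
    intro l
    induction l with
    | zero => intro i j; by_cases h : i = j <;> simp [pow_zero, Matrix.one_apply, h]
    | succ n ih =>
      intro i j
      rw [pow_succ, Matrix.mul_apply]
      exact Finset.sum_nonneg fun k _ => mul_nonneg (ih i k) (hPnonneg k j)
  have hpow_row : ∀ l i, ∑ j, (P ^ l) i j = 1 := by
    intro l
    induction l with
    | zero => intro i; simp [pow_zero, Matrix.one_apply]
    | succ n ih =>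
      intro i
      simp only [pow_succ, Matrix.mul_apply]
      rw [Finset.sum_comm]
      calc ∑ k, ∑ j, (P ^ n) i k * P k j = ∑ k, (P ^ n) i k * ∑ j, P k j := by
            simp [Finset.mul_sum]
        _ = 1 := by simp [hProw, ih]
  have hpow_le : ∀ l i j, (P ^ l) i j ≤ 1 := by
    intro l i j
    calc (P ^ l) i j ≤ ∑ k, (P ^ l) i k :=
          Finset.single_le_sum (fun k _ => hpow_nonneg l i k) (Finset.mem_univ j)
      _ = 1 := hpow_row l i
  have hμs : Summable μ := hμsum.summable
  -- summability of terms
  have hsumm : ∀ (f : ℕ → ℝ), (∀ l, 0 ≤ f l) → (∀ l, f l ≤ μ l) → Summable f := by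
    intro f h1 h2
    exact Summable.of_nonneg_of_le h1 h2 hμs
  have hterm : ∀ i j, Summable (fun l => μ l * (P ^ l) i j) := by
    intro i j
    refine hsumm _ (fun l => mul_nonneg (hμnonneg l) (hpow_nonneg l i j)) (fun l => ?_)
    calc μ l * (P ^ l) i j ≤ μ l * 1 :=
          mul_le_mul_of_nonneg_left (hpow_le l i j) (hμnonneg l)
      _ = μ l := mul_one _
  -- P commutes with Q
  have hPQ : P * Q = Q * P := by
    ext i j
    rw [hQ]
    simp only [Matrix.mul_apply, Matrix.of_apply]
    have h1 : ∀ k, Summable (fun l => P i k * (μ l * (P ^ l) k j)) := fun k =>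
      (hterm k j).mul_left _
    have h2 : ∀ k, Summable (fun l => μ l * (P ^ l) i k * P k j) := fun k =>
      (hterm i k).mul_right _
    calc ∑ k, P i k * ∑' l, μ l * (P ^ l) k j
        = ∑ k, ∑' l, P i k * (μ l * (P ^ l) k j) := by
          refine Finset.sum_congr rfl fun k _ => ?_
          exact (tsum_mul_left).symm
      _ = ∑' l, ∑ k, P i k * (μ l * (P ^ l) k j) := by
          exact (Summable.tsum_finsetSum fun k _ => h1 k).symm
      _ = ∑' l, μ l * (P ^ (l + 1)) i j := by
          refine tsum_congr fun l => ?_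
          rw [pow_succ']
          rw [Matrix.mul_apply, Finset.mul_sum]
          refine Finset.sum_congr rfl fun k _ => ?_
          ring
      _ = ∑' l, ∑ k, μ l * (P ^ l) i k * P k j := by
          refine tsum_congr fun l => ?_
          rw [pow_succ, Matrix.mul_apply, Finset.mul_sum]
          refine Finset.sum_congr rfl fun k _ => ?_
          ring
      _ = ∑ k, ∑' l, μ l * (P ^ l) i k * P k j := Summable.tsum_finsetSum fun k _ => h2 k
      _ = ∑ k, (∑' l, μ l * (P ^ l) i k) * P k j := by
          refine Finset.sum_congr rfl fun k _ => ?_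
          exact tsum_mul_right
  have h1mem : (1 : Matrix (Fin N) (Fin N) ℝ) ∈ ASet S ∩ Com Q := by
    constructor
    · constructor
      · intro i; simp [Matrix.one_apply]
      · intro i j hij
        have : i ≠ j := fun h => hij (h ▸ hdiag i)
        simp [Matrix.one_apply, this]
    · simp [Com]
  refine ⟨h1mem, ?_, ?_⟩
  · intro α hα
    constructor
    · constructor
      · intro i
        simp only [Matrix.add_apply, Matrix.smul_apply, smul_eq_mul, Finset.sum_add_distrib,
          ← Finset.mul_sum]
        rw [h1mem.1.1 i, hProw i]
        ring
      · intro i j hij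
        simp [Matrix.add_apply, h1mem.1.2 i j hij, hPsupp i j hij]
    · show _ * Q = Q * _
      rw [add_mul, mul_add, smul_mul_assoc, smul_mul_assoc, mul_smul_comm, mul_smul_comm,
        one_mul, mul_one, hPQ]
  · intro hPne hset
    have : (1 : Matrix (Fin N) (Fin N) ℝ) ∈ ({P} : Set (Matrix (Fin N) (Fin N) ℝ)) := by
      rw [← hset]; exact h1mem
    exact hPne (Set.mem_singleton_iff.mp this).symm
end

section
/- Let N ≥ 3, let Q be an N×N real matrix, Φ ∈ ℝ^{N²×m}, p₀, p ∈ ℝ^{N²}, and suppose: (i) Δ(Q)Φ has full column rank (so ΦᵀΔ(Q)ᵀΔ(Q)Φ is invertible); (ii) p = p₀ + Φβ* for some β* ∈ ℝ^m; (iii) Δ(Q)p = 0. Then [I − Φ(ΦᵀΔ(Q)ᵀΔ(Q)Φ)⁻¹ΦᵀΔ(Q)ᵀΔ(Q)] p₀ = p. (At the true transition matrix Q of the observed chain, the estimation formula recovers the true vectorized kernel p exactly; this is the deterministic core of the consistency of p̂.) -/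
open Matrix Kronecker

/-!
With `G = ΦᵀDᵀDΦ` and `P = ΦG⁻¹ΦᵀDᵀD`, full column rank of `DΦ` makes the Gram matrix `G`
invertible, so `PΦ = Φ`, while `Pp = 0` because `Dp = 0`. Hence `Pp₀ = P(p − Φβ*) = −Φβ*` and
`(I − P)p₀ = p₀ + Φβ* = p`.
-/

namespace Matrix

variable {l n k : Type*} [Fintype l] [Fintype n] [Fintype k] [DecidableEq k]

theorem isUnit_transpose_mul_self_of_injective {A : Matrix l k ℝ}
    (hA : Function.Injective A.mulVec) : IsUnit (Aᵀ * A) := by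
  simpa only [conjTranspose_eq_transpose_of_trivial] using
    (PosDef.conjTranspose_mul_self A hA).isUnit

theorem mul_gram_inv_mul_mul_self (D : Matrix l n ℝ) {Φ : Matrix n k ℝ}
    (hDΦ : Function.Injective (D * Φ).mulVec) :
    Φ * (Φᵀ * Dᵀ * D * Φ)⁻¹ * (Φᵀ * Dᵀ * D) * Φ = Φ := by
  have hG : Φᵀ * Dᵀ * D * Φ = (D * Φ)ᵀ * (D * Φ) := by
    simp only [transpose_mul, Matrix.mul_assoc]
  have hinv : (Φᵀ * Dᵀ * D * Φ)⁻¹ * (Φᵀ * Dᵀ * D * Φ) = 1 :=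
    nonsing_inv_mul _ <| (isUnit_iff_isUnit_det _).mp <|
      hG ▸ isUnit_transpose_mul_self_of_injective hDΦ
  rw [Matrix.mul_assoc, Matrix.mul_assoc, hinv, Matrix.mul_one]

theorem one_sub_gram_projection_mulVec [DecidableEq n] {D : Matrix l n ℝ} {Φ : Matrix n k ℝ}
    (hDΦ : Function.Injective (D * Φ).mulVec) {p₀ : n → ℝ} {β : k → ℝ}
    (hker : D *ᵥ (p₀ + Φ *ᵥ β) = 0) :
    (1 - Φ * (Φᵀ * Dᵀ * D * Φ)⁻¹ * (Φᵀ * Dᵀ * D)) *ᵥ p₀ = p₀ + Φ *ᵥ β := by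
  set P := Φ * (Φᵀ * Dᵀ * D * Φ)⁻¹ * (Φᵀ * Dᵀ * D)
  have hPΦ : P *ᵥ (Φ *ᵥ β) = Φ *ᵥ β := by
    rw [mulVec_mulVec, mul_gram_inv_mul_mul_self D hDΦ]
  have hPp : P *ᵥ (p₀ + Φ *ᵥ β) = 0 := by
    rw [show P = Φ * (Φᵀ * Dᵀ * D * Φ)⁻¹ * (Φᵀ * Dᵀ) * D by simp only [P, Matrix.mul_assoc],
      ← mulVec_mulVec, hker, mulVec_zero]
  have hPp₀ : P *ᵥ p₀ = -(Φ *ᵥ β) := by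
    rw [mulVec_add, hPΦ] at hPp
    exact eq_neg_of_add_eq_zero_left hPp
  rw [sub_mulVec, one_mulVec, hPp₀, sub_neg_eq_add]

end Matrix

theorem stmt_12_general (N m : ℕ) (Q : Matrix (Fin N) (Fin N) ℝ)
    (Φ : Matrix (Fin N × Fin N) (Fin m) ℝ) (p₀ p : Fin N × Fin N → ℝ)
    (hrank : Function.Injective fun x : Fin m → ℝ => (Delta Q * Φ).mulVec x)
    (hβ : ∃ β : Fin m → ℝ, p = p₀ + Φ.mulVec β)
    (hker : (Delta Q).mulVec p = 0) :
    ((1 : Matrix (Fin N × Fin N) (Fin N × Fin N) ℝ)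
        - Φ * (Φᵀ * (Delta Q)ᵀ * Delta Q * Φ)⁻¹
            * (Φᵀ * (Delta Q)ᵀ * Delta Q)).mulVec p₀ = p := by
  obtain ⟨β, rfl⟩ := hβ
  exact one_sub_gram_projection_mulVec hrank hker

/-- If `Δ(Q)Φ` has full column rank, `p = p₀ + Φβ*` for some `β*` and
`Δ(Q)p = 0`, then `[I − Φ(ΦᵀΔ(Q)ᵀΔ(Q)Φ)⁻¹ΦᵀΔ(Q)ᵀΔ(Q)] p₀ = p`. -/
theorem stmt_12 (N m : ℕ) (hN : 3 ≤ N) (Q : Matrix (Fin N) (Fin N) ℝ)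
    (Φ : Matrix (Fin N × Fin N) (Fin m) ℝ) (p₀ p : Fin N × Fin N → ℝ)
    (hrank : Function.Injective fun x : Fin m → ℝ => (Delta Q * Φ).mulVec x)
    (hβ : ∃ β : Fin m → ℝ, p = p₀ + Φ.mulVec β)
    (hker : (Delta Q).mulVec p = 0) :
    ((1 : Matrix (Fin N × Fin N) (Fin N × Fin N) ℝ)
        - Φ * (Φᵀ * (Delta Q)ᵀ * Delta Q * Φ)⁻¹
            * (Φᵀ * (Delta Q)ᵀ * Delta Q)).mulVec p₀ = p :=
  stmt_12_general N m Q Φ p₀ p hrank hβ hker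
end

section
/- Let N ≥ 3, Φ ∈ ℝ^{N²×m}, p₀ ∈ ℝ^{N²}, and define F(A) = [I − Φ(ΦᵀΔ(A)ᵀΔ(A)Φ)⁻¹ΦᵀΔ(A)ᵀΔ(A)] p₀ for N×N real matrices A such that ΦᵀΔ(A)ᵀΔ(A)Φ is invertible. Let Q, P be N×N real matrices with p = vec(P) satisfying: Δ(Q)Φ has full column rank, p = p₀ + Φβ* for some β*, and Δ(Q)p = 0. Then F is (Fréchet) differentiable at Q, and its derivative is the linear map H ↦ Φ (ΦᵀΔ(Q)ᵀΔ(Q)Φ)⁻¹ ΦᵀΔ(Q)ᵀ Δ(P) vec(H). -/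
open Matrix Kronecker

attribute [local instance] Matrix.normedAddCommGroup Matrix.normedSpace

/-!
Since `vec P - p₀ = Φ β*` lies in the range of `Φ`, which `I - Φ (ΦᵀΔᵀΔΦ)⁻¹ ΦᵀΔᵀΔ` annihilates,
near `Q` we have `F A = vec P - M A (Δ(A) vec P)` with `M A = Φ (ΦᵀΔ(A)ᵀΔ(A)Φ)⁻¹ ΦᵀΔ(A)ᵀ`; the Gram
matrix at `Q` is positive definite by the rank hypothesis, so `M` is continuous at `Q`. The
second factor `Δ(A) vec P = -Δ(P) vec A` is linear in `A` and vanishes at `Q`, and a product whose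
differentiable factor vanishes at a point has derivative `M Q ∘ (derivative of that factor)`
there, with no differentiability needed of the other factor.
-/

open Asymptotics Filter Topology

theorem HasFDerivAt.clm_apply_of_eq_zero {𝕜 E F G : Type*} [NontriviallyNormedField 𝕜]
    [NormedAddCommGroup E] [NormedSpace 𝕜 E] [NormedAddCommGroup F] [NormedSpace 𝕜 F]
    [NormedAddCommGroup G] [NormedSpace 𝕜 G]
    {M : E → F →L[𝕜] G} {w : E → F} {w' : E →L[𝕜] F} {x : E}
    (hM : ContinuousAt M x) (hw : HasFDerivAt w w' x) (hw0 : w x = 0) :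
    HasFDerivAt (fun y => M y (w y)) ((M x).comp w') x := by
  have apply_isBigO : ∀ (N : E → F →L[𝕜] G) (v : E → F),
      (fun y => N y (v y)) =O[𝓝 x] fun y => ‖N y‖ * ‖v y‖ := fun N v =>
    isBigO_of_le _ fun y => by simpa using (N y).le_opNorm (v y)
  have hM_bdd : (fun y => ‖M y‖) =O[𝓝 x] fun _ => (1 : ℝ) :=
    (hM.norm.isBoundedUnder_le.isBigO_one ℝ).norm_left
  have hM_sub : (fun y => ‖M y - M x‖) =o[𝓝 x] fun _ => (1 : ℝ) :=
    (isLittleO_one_iff ℝ).2 <| by simpa using (tendsto_sub_nhds_zero_iff.2 hM).norm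
  have h₁ : (fun y => M y (w y - w x - w' (y - x))) =o[𝓝 x] fun y => y - x := by
    refine (apply_isBigO M _).trans_isLittleO ?_
    simpa using (hM_bdd.mul_isLittleO hw.isLittleO.norm_norm).norm_right
  have h₂ : (fun y => (M y - M x) (w' (y - x))) =o[𝓝 x] fun y => y - x := by
    refine (apply_isBigO (fun y => M y - M x) _).trans_isLittleO ?_
    simpa using (hM_sub.mul_isBigO (w'.isBigO_sub (𝓝 x) x).norm_norm).norm_right
  refine HasFDerivAt.of_isLittleO ((h₁.add h₂).congr_left fun y => ?_)
  simp only [hw0, map_sub, map_zero, _root_.sub_apply, ContinuousLinearMap.comp_apply,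
    sub_zero]
  abel

theorem HasFDerivAt.matrix_mulVec_of_eq_zero {𝕜 E m n : Type*} [NontriviallyNormedField 𝕜]
    [CompleteSpace 𝕜] [NormedAddCommGroup E] [NormedSpace 𝕜 E] [Fintype m] [Fintype n]
    [DecidableEq n] {M : E → Matrix m n 𝕜} {w : E → n → 𝕜} {w' : E →L[𝕜] n → 𝕜} {x : E}
    (hM : ContinuousAt M x) (hw : HasFDerivAt w w' x) (hw0 : w x = 0) :
    HasFDerivAt (fun y => M y *ᵥ w y) ((Matrix.toLin' (M x)).toContinuousLinearMap.comp w') x :=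
  have hlin : Continuous fun A : Matrix m n 𝕜 => (Matrix.toLin' A).toContinuousLinearMap :=
    (LinearMap.toContinuousLinearMap.toLinearMap ∘ₗ Matrix.toLin'.toLinearMap
      : Matrix m n 𝕜 →ₗ[𝕜] (n → 𝕜) →L[𝕜] m → 𝕜).continuous_of_finiteDimensional
  HasFDerivAt.clm_apply_of_eq_zero (hlin.continuousAt.comp hM) hw hw0

theorem Matrix.one_sub_proj_mulVec_sub_mulVec {R ι ι' κ : Type*} [CommRing R] [Fintype ι]
    [DecidableEq ι] [Fintype ι'] [Fintype κ] [DecidableEq κ] (D : Matrix ι' ι R)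
    (Φ : Matrix ι κ R) (p : ι → R) (β : κ → R) (hG : IsUnit (Φᵀ * Dᵀ * D * Φ)) :
    (1 - Φ * (Φᵀ * Dᵀ * D * Φ)⁻¹ * (Φᵀ * Dᵀ * D)) *ᵥ (p - Φ *ᵥ β)
      = p - (Φ * (Φᵀ * Dᵀ * D * Φ)⁻¹ * Φᵀ * Dᵀ) *ᵥ (D *ᵥ p) := by
  have hβ : (Φ * (Φᵀ * Dᵀ * D * Φ)⁻¹ * (Φᵀ * Dᵀ * D)) *ᵥ (Φ *ᵥ β) = Φ *ᵥ β := by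
    rw [mulVec_mulVec, Matrix.mul_assoc, Matrix.mul_assoc,
      nonsing_inv_mul _ ((isUnit_iff_isUnit_det _).1 hG), Matrix.mul_one]
  have hp : (Φ * (Φᵀ * Dᵀ * D * Φ)⁻¹ * (Φᵀ * Dᵀ * D)) *ᵥ p
      = (Φ * (Φᵀ * Dᵀ * D * Φ)⁻¹ * Φᵀ * Dᵀ) *ᵥ (D *ᵥ p) := by
    simp only [mulVec_mulVec, Matrix.mul_assoc]
  rw [sub_mulVec, one_mulVec, mulVec_sub, hβ, hp]
  abel

section Gram

variable {X K ι ι' κ : Type*} [TopologicalSpace X] [NormedField K] [Fintype ι] [Fintype ι']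

theorem continuous_gram {D : X → Matrix ι' ι K} (hD : Continuous D) (Φ : Matrix ι κ K) :
    Continuous fun y => Φᵀ * (D y)ᵀ * D y * Φ := by
  fun_prop

theorem eventually_isUnit_gram [Fintype κ] [DecidableEq κ] {D : X → Matrix ι' ι K}
    (hD : Continuous D) (Φ : Matrix ι κ K) {x : X} (hG : IsUnit (Φᵀ * (D x)ᵀ * D x * Φ)) :
    ∀ᶠ y in 𝓝 x, IsUnit (Φᵀ * (D y)ᵀ * D y * Φ) := by
  have hdet := ((isUnit_iff_isUnit_det _).1 hG).ne_zero
  filter_upwards [(continuous_gram hD Φ).matrix_det.continuousAt.eventually_ne hdet] with y hy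
  exact (isUnit_iff_isUnit_det _).2 hy.isUnit

theorem continuousAt_gram_inv_mul [Fintype κ] [DecidableEq κ] {D : X → Matrix ι' ι K}
    (hD : Continuous D) (Φ : Matrix ι κ K) {x : X} (hG : IsUnit (Φᵀ * (D x)ᵀ * D x * Φ)) :
    ContinuousAt (fun y => Φ * (Φᵀ * (D y)ᵀ * D y * Φ)⁻¹ * Φᵀ * (D y)ᵀ) x := by
  have hinv : ContinuousAt (fun y => (Φᵀ * (D y)ᵀ * D y * Φ)⁻¹) x := by
    refine (continuousAt_matrix_inv _ ?_).comp (continuous_gram hD Φ).continuousAt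
    rw [Ring.inverse_eq_inv']
    exact continuousAt_inv₀ ((isUnit_iff_isUnit_det _).1 hG).ne_zero
  have hmul : Continuous fun q : Matrix κ κ K × Matrix ι' ι K => Φ * q.1 * Φᵀ * q.2ᵀ := by
    fun_prop
  exact hmul.continuousAt.comp (f := fun y => ((Φᵀ * (D y)ᵀ * D y * Φ)⁻¹, D y))
    (hinv.prodMk hD.continuousAt)

end Gram

section Delta

variable {N : ℕ}

theorem Delta_mulVec_vecM (H X : Matrix (Fin N) (Fin N) ℝ) :
    Delta H *ᵥ vecM X = vecM (H * X - X * H) := by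
  funext q
  obtain ⟨a, b⟩ := q
  simp only [Delta, vecM, Matrix.mulVec, dotProduct, Matrix.sub_apply,
    Matrix.kroneckerMap_apply, Matrix.one_apply, Matrix.transpose_apply,
    Fintype.sum_prod_type, Matrix.mul_apply, sub_mul, ite_mul, one_mul, zero_mul]
  rw [Finset.sum_comm]
  simp [Finset.sum_sub_distrib, Finset.sum_ite_eq, mul_comm]

theorem Delta_mulVec_vecM_comm (A X : Matrix (Fin N) (Fin N) ℝ) :
    Delta A *ᵥ vecM X = -(Delta X *ᵥ vecM A) := by
  rw [Delta_mulVec_vecM, Delta_mulVec_vecM, ← neg_sub]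
  rfl

theorem continuous_Delta : Continuous (Delta : Matrix (Fin N) (Fin N) ℝ → _) :=
  continuous_pi fun i => continuous_pi fun j => by
    simp only [Delta, Matrix.sub_apply, kroneckerMap_apply, transpose_apply]
    fun_prop

def vecMLinearMap : Matrix (Fin N) (Fin N) ℝ →ₗ[ℝ] Fin N × Fin N → ℝ where
  toFun := vecM
  map_add' _ _ := rfl
  map_smul' _ _ := rfl

theorem hasFDerivAt_Delta_mulVec_vecM (P Q : Matrix (Fin N) (Fin N) ℝ) :
    HasFDerivAt (fun A => Delta A *ᵥ vecM P)
      (-(toLin' (Delta P) ∘ₗ vecMLinearMap).toContinuousLinearMap) Q := by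
  simp only [Delta_mulVec_vecM_comm _ P]
  exact (-(toLin' (Delta P) ∘ₗ vecMLinearMap).toContinuousLinearMap).hasFDerivAt

end Delta

theorem stmt_13_general (N m : ℕ)
    (Φ : Matrix (Fin N × Fin N) (Fin m) ℝ) (p₀ : Fin N × Fin N → ℝ)
    (F : Matrix (Fin N) (Fin N) ℝ → (Fin N × Fin N → ℝ))
    (hF : ∀ A, F A =
      ((1 : Matrix (Fin N × Fin N) (Fin N × Fin N) ℝ)
        - Φ * (Φᵀ * (Delta A)ᵀ * Delta A * Φ)⁻¹
            * (Φᵀ * (Delta A)ᵀ * Delta A)).mulVec p₀)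
    (Q P : Matrix (Fin N) (Fin N) ℝ)
    (hrank : Function.Injective fun x : Fin m → ℝ => (Delta Q * Φ).mulVec x)
    (hβ : ∃ β : Fin m → ℝ, vecM P = p₀ + Φ.mulVec β)
    (hker : (Delta Q).mulVec (vecM P) = 0) :
    ∃ L : Matrix (Fin N) (Fin N) ℝ →L[ℝ] (Fin N × Fin N → ℝ),
      HasFDerivAt F L Q ∧
      ∀ H : Matrix (Fin N) (Fin N) ℝ,
        L H = (Φ * (Φᵀ * (Delta Q)ᵀ * Delta Q * Φ)⁻¹
                * Φᵀ * (Delta Q)ᵀ * Delta P).mulVec (vecM H) := by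
  obtain ⟨β, hβ⟩ := hβ
  have hGQ : IsUnit (Φᵀ * (Delta Q)ᵀ * Delta Q * Φ) := by
    simpa [transpose_mul, Matrix.mul_assoc] using (PosDef.conjTranspose_mul_self _ hrank).isUnit
  have hF_near : F =ᶠ[𝓝 Q] fun A => vecM P -
      (Φ * (Φᵀ * (Delta A)ᵀ * Delta A * Φ)⁻¹ * Φᵀ * (Delta A)ᵀ) *ᵥ (Delta A *ᵥ vecM P) := by
    filter_upwards [eventually_isUnit_gram continuous_Delta Φ hGQ] with A hA
    rw [hF, eq_sub_of_add_eq hβ.symm, one_sub_proj_mulVec_sub_mulVec _ _ _ _ hA]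
  have hderiv := (HasFDerivAt.matrix_mulVec_of_eq_zero
    (continuousAt_gram_inv_mul continuous_Delta Φ hGQ)
    (hasFDerivAt_Delta_mulVec_vecM P Q) hker).const_sub (vecM P)
  refine ⟨_, hderiv.congr_of_eventuallyEq hF_near, fun H => ?_⟩
  change -((Φ * (Φᵀ * (Delta Q)ᵀ * Delta Q * Φ)⁻¹ * Φᵀ * (Delta Q)ᵀ) *ᵥ
    -(Delta P *ᵥ vecM H)) = _
  rw [mulVec_neg, neg_neg, mulVec_mulVec]

/-- With `F(A) = [I − Φ(ΦᵀΔ(A)ᵀΔ(A)Φ)⁻¹ΦᵀΔ(A)ᵀΔ(A)]p₀`, if `Δ(Q)Φ` has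
full column rank, `vec(P) = p₀ + Φβ*` for some `β*` and `Δ(Q) vec(P) = 0`, then `F` is
Fréchet differentiable at `Q` with derivative
`H ↦ Φ(ΦᵀΔ(Q)ᵀΔ(Q)Φ)⁻¹ΦᵀΔ(Q)ᵀΔ(P) vec(H)`. -/
theorem stmt_13 (N m : ℕ) (hN : 3 ≤ N)
    (Φ : Matrix (Fin N × Fin N) (Fin m) ℝ) (p₀ : Fin N × Fin N → ℝ)
    (F : Matrix (Fin N) (Fin N) ℝ → (Fin N × Fin N → ℝ))
    (hF : ∀ A, F A =
      ((1 : Matrix (Fin N × Fin N) (Fin N × Fin N) ℝ)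
        - Φ * (Φᵀ * (Delta A)ᵀ * Delta A * Φ)⁻¹
            * (Φᵀ * (Delta A)ᵀ * Delta A)).mulVec p₀)
    (Q P : Matrix (Fin N) (Fin N) ℝ)
    (hrank : Function.Injective fun x : Fin m → ℝ => (Delta Q * Φ).mulVec x)
    (hβ : ∃ β : Fin m → ℝ, vecM P = p₀ + Φ.mulVec β)
    (hker : (Delta Q).mulVec (vecM P) = 0) :
    ∃ L : Matrix (Fin N) (Fin N) ℝ →L[ℝ] (Fin N × Fin N → ℝ),
      HasFDerivAt F L Q ∧
      ∀ H : Matrix (Fin N) (Fin N) ℝ,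
        L H = (Φ * (Φᵀ * (Delta Q)ᵀ * Delta Q * Φ)⁻¹
                * Φᵀ * (Delta Q)ᵀ * Delta P).mulVec (vecM H) :=
  stmt_13_general N m Φ p₀ F hF Q P hrank hβ hker
end
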